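/- arXiv:1403.5133 — 2 statements merged into one kernel-verified Lean document; each statement's English description precedes it below -/
import Mathlib

section
/- Let T = T* ∈ B(𝔥) be a bounded selfadjoint operator on a complex Hilbert space with ν₋(I − T²) < ∞. Then ν₋(I − T²) = ν₋(I + T) + ν₋(I − T). -/
noncomputable section

open ContinuousLinearMap

/-- The negative index `ν₋(A)` of a bounded operator `A` on a complex inner ℂ product space:
the supremum of the dimensions of the subspaces on which the quadratic form of `A` is
negative definite. -/
def negIndex {H : Type*} [NormedAddCommGroup H] [InnerProductSpace ℂ H]
    (A : H →L[ℂ] H) : Cardinal :=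
  ⨆ M : {M : Submodule ℂ H // ∀ f ∈ M, f ≠ 0 → (inner ℂ (A f) f : ℂ).re < 0},
    Module.rank ℂ M.1

/-- The positive index `ν₊(A)`. -/
def posIndex {H : Type*} [NormedAddCommGroup H] [InnerProductSpace ℂ H]
    (A : H →L[ℂ] H) : Cardinal :=
  ⨆ M : {M : Submodule ℂ H // ∀ f ∈ M, f ≠ 0 → 0 < (inner ℂ (A f) f : ℂ).re},
    Module.rank ℂ M.1

/-- The modulus `|A| = (A*A)^{1/2}` of a bounded operator between Hilbert spaces. -/
def opAbs {H K : Type*} [NormedAddCommGroup H] [InnerProductSpace ℂ H] [CompleteSpace H]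
    [NormedAddCommGroup K] [InnerProductSpace ℂ K] [CompleteSpace K]
    (A : H →L[ℂ] K) : H →L[ℂ] H :=
  CFC.sqrt (ContinuousLinearMap.adjoint A ∘L A)

/-- The square root `|A|^{1/2}` of the modulus of `A`. -/
def opAbsSqrt {H K : Type*} [NormedAddCommGroup H] [InnerProductSpace ℂ H] [CompleteSpace H]
    [NormedAddCommGroup K] [InnerProductSpace ℂ K] [CompleteSpace K]
    (A : H →L[ℂ] K) : H →L[ℂ] H :=
  CFC.sqrt (opAbs A)

/-- A symmetry (fundamental symmetry): a selfadjoint unitary operator. -/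
def IsSymmetryOp {H : Type*} [NormedAddCommGroup H] [InnerProductSpace ℂ H] [CompleteSpace H]
    (J : H →L[ℂ] H) : Prop :=
  IsSelfAdjoint J ∧ J ∘L J = 1

/-- `J` is a signature operator for the selfadjoint operator `A`: a selfadjoint unitary
commuting with `A` such that `A = J|A|`. -/
def IsSignatureOp {H : Type*} [NormedAddCommGroup H] [InnerProductSpace ℂ H] [CompleteSpace H]
    (A J : H →L[ℂ] H) : Prop :=
  IsSelfAdjoint J ∧ J ∘L J = 1 ∧ A ∘L J = J ∘L A ∧ A = J ∘L opAbs A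

/-- The block operator `[[A, B], [C, D]]` acting from `H₁ ⊕ H₂` to `K₁ ⊕ K₂`
(orthogonal direct sums realized as `L²`-products). -/
def blockOp {H₁ H₂ K₁ K₂ : Type*}
    [NormedAddCommGroup H₁] [InnerProductSpace ℂ H₁]
    [NormedAddCommGroup H₂] [InnerProductSpace ℂ H₂]
    [NormedAddCommGroup K₁] [InnerProductSpace ℂ K₁]
    [NormedAddCommGroup K₂] [InnerProductSpace ℂ K₂]
    (A : H₁ →L[ℂ] K₁) (B : H₂ →L[ℂ] K₁) (C : H₁ →L[ℂ] K₂) (D : H₂ →L[ℂ] K₂) :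
    WithLp 2 (H₁ × H₂) →L[ℂ] WithLp 2 (K₁ × K₂) :=
  (WithLp.prodContinuousLinearEquiv 2 ℂ K₁ K₂).symm.toContinuousLinearMap ∘L
    ((A ∘L ContinuousLinearMap.fst ℂ H₁ H₂ + B ∘L ContinuousLinearMap.snd ℂ H₁ H₂).prod
      (C ∘L ContinuousLinearMap.fst ℂ H₁ H₂ + D ∘L ContinuousLinearMap.snd ℂ H₁ H₂)) ∘L
    (WithLp.prodContinuousLinearEquiv 2 ℂ H₁ H₂).toContinuousLinearMap

/-- The canonical embedding of `H₁` into `H₁ ⊕ H₂`. -/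
def embFst {H₁ H₂ : Type*}
    [NormedAddCommGroup H₁] [InnerProductSpace ℂ H₁]
    [NormedAddCommGroup H₂] [InnerProductSpace ℂ H₂] :
    H₁ →L[ℂ] WithLp 2 (H₁ × H₂) :=
  (WithLp.prodContinuousLinearEquiv 2 ℂ H₁ H₂).symm.toContinuousLinearMap ∘L
    ContinuousLinearMap.inl ℂ H₁ H₂

/-- The canonical embedding of `H₂` into `H₁ ⊕ H₂`. -/
def embSnd {H₁ H₂ : Type*}
    [NormedAddCommGroup H₁] [InnerProductSpace ℂ H₁]
    [NormedAddCommGroup H₂] [InnerProductSpace ℂ H₂] :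
    H₂ →L[ℂ] WithLp 2 (H₁ × H₂) :=
  (WithLp.prodContinuousLinearEquiv 2 ℂ H₁ H₂).symm.toContinuousLinearMap ∘L
    ContinuousLinearMap.inr ℂ H₁ H₂

/-- The orthogonal projection of `H₁ ⊕ H₂` onto the first component. -/
def projFst {H₁ H₂ : Type*}
    [NormedAddCommGroup H₁] [InnerProductSpace ℂ H₁]
    [NormedAddCommGroup H₂] [InnerProductSpace ℂ H₂] :
    WithLp 2 (H₁ × H₂) →L[ℂ] H₁ :=
  ContinuousLinearMap.fst ℂ H₁ H₂ ∘L
    (WithLp.prodContinuousLinearEquiv 2 ℂ H₁ H₂).toContinuousLinearMap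

/-- The orthogonal projection of `H₁ ⊕ H₂` onto the second component. -/
def projSnd {H₁ H₂ : Type*}
    [NormedAddCommGroup H₁] [InnerProductSpace ℂ H₁]
    [NormedAddCommGroup H₂] [InnerProductSpace ℂ H₂] :
    WithLp 2 (H₁ × H₂) →L[ℂ] H₂ :=
  ContinuousLinearMap.snd ℂ H₁ H₂ ∘L
    (WithLp.prodContinuousLinearEquiv 2 ℂ H₁ H₂).toContinuousLinearMap

namespace NegIdxAux

variable {H : Type*} [NormedAddCommGroup H] [InnerProductSpace ℂ H] [CompleteSpace H]

lemma innerSA (A : H →L[ℂ] H) (hA : IsSelfAdjoint A) (x y : H) :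
    (inner ℂ (A x) y : ℂ) = inner ℂ x (A y) := by
  rw [← ContinuousLinearMap.adjoint_inner_left, hA.adjoint_eq]

variable (T : H →L[ℂ] H)

lemma quadSq (h : ℝ → ℝ) (hc : Continuous h) (x : H) :
    (inner ℂ (cfc (fun s => h s * h s) T x) x : ℂ).re = ‖cfc h T x‖ ^ 2 := by
  have h1 : cfc (fun s => h s * h s) T = cfc h T * cfc h T :=
    cfc_mul h h T hc.continuousOn hc.continuousOn
  rw [h1, ContinuousLinearMap.mul_apply,
    innerSA (cfc h T) (cfc_predicate h T) (cfc h T x) x, inner_self_eq_norm_sq_to_K]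
  norm_cast

lemma quadNonneg (h : ℝ → ℝ) (hc : Continuous h) (h0 : ∀ s, 0 ≤ h s) (x : H) :
    0 ≤ (inner ℂ (cfc h T x) x : ℂ).re := by
  have e : h = fun s => Real.sqrt (h s) * Real.sqrt (h s) :=
    funext fun s => (Real.mul_self_sqrt (h0 s)).symm
  rw [show cfc h T = cfc (fun s => Real.sqrt (h s) * Real.sqrt (h s)) T from by rw [← e],
    quadSq T _ (hc.sqrt) x]
  positivity

lemma cubeRe (g : ℝ → ℝ) (hc : Continuous g) (h0 : ∀ s, 0 ≤ g s) (x : H) :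
    (inner ℂ (cfc (fun s => g s * (g s * g s)) T x) x : ℂ).re
      = ‖cfc (fun s => g s * Real.sqrt (g s)) T x‖ ^ 2 := by
  have e : (fun s => g s * (g s * g s))
      = fun s => (g s * Real.sqrt (g s)) * (g s * Real.sqrt (g s)) := by
    funext s
    have h := Real.mul_self_sqrt (h0 s)
    linear_combination (-(g s * g s)) * h
  rw [e]; exact quadSq T (fun s => g s * Real.sqrt (g s)) (hc.mul (hc.sqrt)) x

lemma cfc_eq_zero_of_cube (g : ℝ → ℝ) (hc : Continuous g) (h0 : ∀ s, 0 ≤ g s) (x : H)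
    (hx : (inner ℂ (cfc (fun s => g s * (g s * g s)) T x) x : ℂ).re ≤ 0) :
    cfc g T x = 0 := by
  have hsc : Continuous fun s => g s * Real.sqrt (g s) :=
    hc.mul (hc.sqrt)
  rw [cubeRe T g hc h0 x] at hx
  have hm : cfc (fun s => g s * Real.sqrt (g s)) T x = 0 := by
    have h1 : ‖cfc (fun s => g s * Real.sqrt (g s)) T x‖ ^ 2 = 0 :=
      le_antisymm hx (by positivity)
    exact norm_eq_zero.mp (pow_eq_zero_iff two_ne_zero |>.mp h1)
  have e2 : cfc (fun s => g s * g s) T x = 0 := by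
    have h3 : (fun s => g s * g s)
        = fun s => Real.sqrt (g s) * (g s * Real.sqrt (g s)) := by
      funext s
      have h := Real.mul_self_sqrt (h0 s)
      linear_combination (-(g s)) * h
    rw [h3, cfc_mul _ _ T (hc.sqrt).continuousOn hsc.continuousOn,
      ContinuousLinearMap.mul_apply, hm, map_zero]
  have h4 : ‖cfc g T x‖ ^ 2 = 0 := by
    rw [← quadSq T g hc x, e2]
    simp
  exact norm_eq_zero.mp (pow_eq_zero_iff two_ne_zero |>.mp h4)

lemma formRange (w g : ℝ → ℝ) (hw : Continuous w) (hg : Continuous g) (x : H) :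
    (inner ℂ (cfc w T (cfc g T x)) (cfc g T x) : ℂ)
      = inner ℂ (cfc (fun s => g s * (w s * g s)) T x) x := by
  have hmul : cfc (fun s => w s * g s) T = cfc w T * cfc g T :=
    cfc_mul w g T hw.continuousOn hg.continuousOn
  have h1 : cfc w T (cfc g T x) = cfc (fun s => w s * g s) T x := by rw [hmul]; rfl
  rw [h1, ← innerSA (cfc g T) (cfc_predicate g T) (cfc (fun s => w s * g s) T x) x]
  congr 1
  have hmul2 : cfc (fun s => g s * (w s * g s)) T
      = cfc g T * cfc (fun s => w s * g s) T :=
    cfc_mul g _ T hg.continuousOn (hw.mul hg).continuousOn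
  rw [hmul2]; rfl

lemma rangeEq (w g r : ℝ → ℝ) (hw : Continuous w) (hg : Continuous g)
    (hr : Continuous r)
    (hid : ∀ s, g s * (w s * g s) = -(g s * (g s * g s)) - r s) (x : H) :
    (inner ℂ (cfc w T (cfc g T x)) (cfc g T x) : ℂ).re
      = -(inner ℂ (cfc (fun s => g s * (g s * g s)) T x) x : ℂ).re
        - (inner ℂ (cfc r T x) x : ℂ).re := by
  rw [formRange T w g hw hg x, show (fun s => g s * (w s * g s))
      = fun s => -(g s * (g s * g s)) - r s from funext hid,
    cfc_sub (fun s => -(g s * (g s * g s))) r T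
      ((hg.mul (hg.mul hg)).neg.continuousOn) hr.continuousOn,
    cfc_neg (fun s => g s * (g s * g s)) T]
  simp [ContinuousLinearMap.sub_apply, ContinuousLinearMap.neg_apply,
    inner_sub_left, inner_neg_left]

lemma rangeNonpos (w g r : ℝ → ℝ) (hw : Continuous w) (hg : Continuous g)
    (hg0 : ∀ s, 0 ≤ g s) (hr : Continuous r) (hr0 : ∀ s, 0 ≤ r s)
    (hid : ∀ s, g s * (w s * g s) = -(g s * (g s * g s)) - r s) (x : H) :
    (inner ℂ (cfc w T (cfc g T x)) (cfc g T x) : ℂ).re ≤ 0 := by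
  rw [rangeEq T w g r hw hg hr hid x]
  have h1 := quadNonneg T (fun s => g s * (g s * g s))
    (hg.mul (hg.mul hg)) (fun s => mul_nonneg (hg0 s) (mul_nonneg (hg0 s) (hg0 s))) x
  have h2 := quadNonneg T r hr hr0 x
  linarith

lemma rangeNeg (w g r : ℝ → ℝ) (hw : Continuous w) (hg : Continuous g)
    (hg0 : ∀ s, 0 ≤ g s) (hr : Continuous r) (hr0 : ∀ s, 0 ≤ r s)
    (hid : ∀ s, g s * (w s * g s) = -(g s * (g s * g s)) - r s) (x : H)
    (hx : cfc g T x ≠ 0) :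
    (inner ℂ (cfc w T (cfc g T x)) (cfc g T x) : ℂ).re < 0 := by
  rw [rangeEq T w g r hw hg hr hid x]
  have h2 := quadNonneg T r hr hr0 x
  by_contra hcon
  push_neg at hcon
  exact hx (cfc_eq_zero_of_cube T g hg hg0 x (by linarith))

lemma cross (hT : IsSelfAdjoint T) (w g k : ℝ → ℝ) (hw : Continuous w) (hg : Continuous g) (hk : Continuous k)
    (h0 : ∀ s, k s * (w s * g s) = 0) (x z : H) :
    (inner ℂ (cfc w T (cfc g T x)) (cfc k T z) : ℂ) = 0 := by
  have hmul : cfc (fun s => w s * g s) T = cfc w T * cfc g T :=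
    cfc_mul w g T hw.continuousOn hg.continuousOn
  have h1 : cfc w T (cfc g T x) = cfc (fun s => w s * g s) T x := by rw [hmul]; rfl
  rw [h1, ← innerSA (cfc k T) (cfc_predicate k T) (cfc (fun s => w s * g s) T x) z]
  have h2 : cfc k T (cfc (fun s => w s * g s) T x) = 0 := by
    have hmul2 : cfc (fun s => k s * (w s * g s)) T
        = cfc k T * cfc (fun s => w s * g s) T :=
      cfc_mul k _ T hk.continuousOn (hw.mul hg).continuousOn
    have h3 : cfc (fun s => k s * (w s * g s)) T = 0 := by
      rw [show (fun s => k s * (w s * g s)) = fun _ : ℝ => (0:ℝ) from funext h0,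
        cfc_const (0:ℝ) T hT, map_zero]
    have := hmul2.symm.trans h3
    calc cfc k T (cfc (fun s => w s * g s) T x)
        = (cfc k T * cfc (fun s => w s * g s) T) x := rfl
      _ = 0 := by rw [this]; rfl
  rw [h2, inner_zero_left]


/-- the two cut-off functions -/
def gm : ℝ → ℝ := fun s => max (-1 - s) 0
def gp : ℝ → ℝ := fun s => max (s - 1) 0

lemma gm_cont : Continuous gm := (continuous_const.sub continuous_id).max continuous_const
lemma gp_cont : Continuous gp := (continuous_id.sub continuous_const).max continuous_const
lemma gm_nonneg : ∀ s, 0 ≤ gm s := fun s => le_max_right _ _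
lemma gp_nonneg : ∀ s, 0 ≤ gp s := fun s => le_max_right _ _

lemma gmgp : ∀ s : ℝ, gm s * gp s = 0 := by
  intro s
  rcases le_total s 0 with h | h
  · have : gp s = 0 := max_eq_right (by linarith)
    rw [this, mul_zero]
  · have : gm s = 0 := max_eq_right (by linarith)
    rw [this, zero_mul]

lemma idm : ∀ s : ℝ, gm s * ((1 + s) * gm s)
    = -(gm s * (gm s * gm s)) - (fun _ : ℝ => (0:ℝ)) s := by
  intro s
  rcases le_total (-1 - s) 0 with h | h
  · simp [gm, max_eq_right h]
  · simp only [gm, max_eq_left h]; ring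

lemma idp : ∀ s : ℝ, gp s * ((1 - s) * gp s)
    = -(gp s * (gp s * gp s)) - (fun _ : ℝ => (0:ℝ)) s := by
  intro s
  rcases le_total (s - 1) 0 with h | h
  · simp [gp, max_eq_right h]
  · simp only [gp, max_eq_left h]; ring

lemma idmA : ∀ s : ℝ, gm s * ((1 - s * s) * gm s)
    = -(gm s * (gm s * gm s))
      - (fun t : ℝ => gm t * (gm t * gm t) + (gm t * gm t) * (gm t * gm t)) s := by
  intro s
  rcases le_total (-1 - s) 0 with h | h
  · simp [gm, max_eq_right h]
  · simp only [gm, max_eq_left h]; ring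

lemma idpA : ∀ s : ℝ, gp s * ((1 - s * s) * gp s)
    = -(gp s * (gp s * gp s))
      - (fun t : ℝ => gp t * (gp t * gp t) + (gp t * gp t) * (gp t * gp t)) s := by
  intro s
  rcases le_total (s - 1) 0 with h | h
  · simp [gp, max_eq_right h]
  · simp only [gp, max_eq_left h]; ring

variable (T : H →L[ℂ] H) (hT : IsSelfAdjoint T)

include hT

lemma hOnePlus : cfc (fun s : ℝ => 1 + s) T = 1 + T := by
  rw [cfc_add T (fun _ => 1) (fun s => s), cfc_const_one ℝ T, cfc_id' ℝ T]

lemma hOneMinus : cfc (fun s : ℝ => 1 - s) T = 1 - T := by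
  rw [cfc_sub (fun _ => (1:ℝ)) (fun s => s) T, cfc_const_one ℝ T, cfc_id' ℝ T]

lemma hAop : cfc (fun s : ℝ => 1 - s * s) T = 1 - T ∘L T := by
  rw [cfc_sub (fun _ => (1:ℝ)) (fun s => s * s) T, cfc_const_one ℝ T,
    cfc_mul (fun s : ℝ => s) (fun s : ℝ => s) T, cfc_id' ℝ T]
  rfl


include hT in
lemma posPlus (f : H) (hm : cfc gm T f = 0) : 0 ≤ (inner ℂ ((1 + T) f) f : ℂ).re := by
  rw [← hOnePlus T hT]
  have hdec : (fun s : ℝ => 1 + s) = fun s => max (1 + s) 0 - gm s := by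
    funext s
    rcases le_total (-1 - s) 0 with h | h
    · rw [show gm s = 0 from max_eq_right h, max_eq_left (by linarith), sub_zero]
    · rw [show gm s = -1 - s from max_eq_left h, max_eq_right (by linarith)]; ring
  rw [hdec, cfc_sub (fun s : ℝ => max (1 + s) 0) gm T
    ((continuous_const.add continuous_id).max continuous_const).continuousOn
    gm_cont.continuousOn, ContinuousLinearMap.sub_apply, hm, sub_zero]
  exact quadNonneg T _ ((continuous_const.add continuous_id).max continuous_const)
    (fun s => le_max_right _ _) f

include hT in
lemma posMinus (f : H) (hp : cfc gp T f = 0) : 0 ≤ (inner ℂ ((1 - T) f) f : ℂ).re := by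
  rw [← hOneMinus T hT]
  have hdec : (fun s : ℝ => 1 - s) = fun s => max (1 - s) 0 - gp s := by
    funext s
    rcases le_total (s - 1) 0 with h | h
    · rw [show gp s = 0 from max_eq_right h, max_eq_left (by linarith), sub_zero]
    · rw [show gp s = s - 1 from max_eq_left h, max_eq_right (by linarith)]; ring
  rw [hdec, cfc_sub (fun s : ℝ => max (1 - s) 0) gp T
    ((continuous_const.sub continuous_id).max continuous_const).continuousOn
    gp_cont.continuousOn, ContinuousLinearMap.sub_apply, hp, sub_zero]
  exact quadNonneg T _ ((continuous_const.sub continuous_id).max continuous_const)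
    (fun s => le_max_right _ _) f

include hT in
lemma posA (f : H) (hm : cfc gm T f = 0) (hp : cfc gp T f = 0) :
    0 ≤ (inner ℂ ((1 - T ∘L T) f) f : ℂ).re := by
  rw [← hAop T hT]
  have hdec : (fun s : ℝ => 1 - s * s)
      = fun s => ((s - 1) * gm s + (-(1 + s)) * gp s) + max (1 - s * s) 0 := by
    funext s
    rcases le_total s (-1) with h | h
    · rw [show gm s = -1 - s from max_eq_left (by linarith),
        show gp s = 0 from max_eq_right (by linarith),
        max_eq_right (by nlinarith)]
      ring
    · rcases le_total s 1 with h' | h'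
      · rw [show gm s = 0 from max_eq_right (by linarith),
          show gp s = 0 from max_eq_right (by linarith),
          max_eq_left (by nlinarith)]
        ring
      · rw [show gm s = 0 from max_eq_right (by linarith),
          show gp s = s - 1 from max_eq_left (by linarith),
          max_eq_right (by nlinarith)]
        ring
  have c1 : Continuous fun s : ℝ => (s - 1) * gm s :=
    (continuous_id.sub continuous_const).mul gm_cont
  have c2 : Continuous fun s : ℝ => (-(1 + s)) * gp s :=
    (continuous_const.add continuous_id).neg.mul gp_cont
  have c3 : Continuous fun s : ℝ => max (1 - s * s) 0 :=
    (continuous_const.sub (continuous_id.mul continuous_id)).max continuous_const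
  have t1 : cfc (fun s : ℝ => (s - 1) * gm s) T f = 0 := by
    rw [cfc_mul (fun s : ℝ => s - 1) gm T
      (continuous_id.sub continuous_const).continuousOn gm_cont.continuousOn,
      ContinuousLinearMap.mul_apply, hm, map_zero]
  have t2 : cfc (fun s : ℝ => (-(1 + s)) * gp s) T f = 0 := by
    rw [cfc_mul (fun s : ℝ => -(1 + s)) gp T
      (continuous_const.add continuous_id).neg.continuousOn gp_cont.continuousOn,
      ContinuousLinearMap.mul_apply, hp, map_zero]
  rw [hdec, cfc_add T (fun s : ℝ => (s - 1) * gm s + (-(1 + s)) * gp s)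
    (fun s : ℝ => max (1 - s * s) 0) (c1.add c2).continuousOn c3.continuousOn,
    cfc_add T _ _ c1.continuousOn c2.continuousOn,
    ContinuousLinearMap.add_apply, ContinuousLinearMap.add_apply, t1, t2]
  simpa using quadNonneg T _ c3 (fun s => le_max_right _ _) f


end NegIdxAux

open NegIdxAux in
set_option maxHeartbeats 1000000 in
/-- for selfadjoint `T` with `ν₋(I − T²) < ∞` one has
`ν₋(I − T²) = ν₋(I + T) + ν₋(I − T)`. -/
theorem negIndex_one_sub_sq
    {H : Type*} [NormedAddCommGroup H] [InnerProductSpace ℂ H] [CompleteSpace H]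
    (T : H →L[ℂ] H) (hT : IsSelfAdjoint T)
    (hfin : negIndex (1 - T ∘L T) < Cardinal.aleph0) :
    negIndex (1 - T ∘L T) = negIndex (1 + T) + negIndex (1 - T) := by
  clear hfin
  have wPc : Continuous (fun s : ℝ => 1 + s) := continuous_const.add continuous_id
  have wMc : Continuous (fun s : ℝ => 1 - s) := continuous_const.sub continuous_id
  have wAc : Continuous (fun s : ℝ => 1 - s * s) :=
    continuous_const.sub (continuous_id.mul continuous_id)
  have rmc : Continuous (fun t : ℝ => gm t * (gm t * gm t) + (gm t * gm t) * (gm t * gm t)) :=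
    (gm_cont.mul (gm_cont.mul gm_cont)).add ((gm_cont.mul gm_cont).mul (gm_cont.mul gm_cont))
  have rpc : Continuous (fun t : ℝ => gp t * (gp t * gp t) + (gp t * gp t) * (gp t * gp t)) :=
    (gp_cont.mul (gp_cont.mul gp_cont)).add ((gp_cont.mul gp_cont).mul (gp_cont.mul gp_cont))
  have rm0 : ∀ t, 0 ≤ gm t * (gm t * gm t) + (gm t * gm t) * (gm t * gm t) := fun t => by
    have := gm_nonneg t; positivity
  have rp0 : ∀ t, 0 ≤ gp t * (gp t * gp t) + (gp t * gp t) * (gp t * gp t) := fun t => by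
    have := gp_nonneg t; positivity
  set Vm : Submodule ℂ H := LinearMap.range (cfc gm T).toLinearMap with hVmdef
  set Vp : Submodule ℂ H := LinearMap.range (cfc gp T).toLinearMap with hVpdef
  -- Vm is negative for 1 + T
  have hVmNeg : ∀ f ∈ Vm, f ≠ 0 → (inner ℂ ((1 + T) f) f : ℂ).re < 0 := by
    intro f hf hne
    obtain ⟨x, rfl⟩ := LinearMap.mem_range.mp hf
    rw [← hOnePlus T hT]
    exact rangeNeg T _ gm _ wPc gm_cont gm_nonneg continuous_const
      (fun _ => le_refl 0) idm x hne
  have hVpNeg : ∀ f ∈ Vp, f ≠ 0 → (inner ℂ ((1 - T) f) f : ℂ).re < 0 := by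
    intro f hf hne
    obtain ⟨x, rfl⟩ := LinearMap.mem_range.mp hf
    rw [← hOneMinus T hT]
    exact rangeNeg T _ gp _ wMc gp_cont gp_nonneg continuous_const
      (fun _ => le_refl 0) idp x hne
  -- cross-product vanishing
  have hgpwgm : ∀ s : ℝ, gp s * ((1 - s * s) * gm s) = 0 := fun s => by
    rw [show gp s * ((1 - s * s) * gm s) = (1 - s * s) * (gm s * gp s) by ring, gmgp s,
      mul_zero]
  have hgmwgp : ∀ s : ℝ, gm s * ((1 - s * s) * gp s) = 0 := fun s => by
    rw [show gm s * ((1 - s * s) * gp s) = (1 - s * s) * (gm s * gp s) by ring, gmgp s,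
      mul_zero]
  -- Vm ⊔ Vp is negative for 1 - T²
  have hWNeg : ∀ f ∈ Vm ⊔ Vp, f ≠ 0 → (inner ℂ ((1 - T ∘L T) f) f : ℂ).re < 0 := by
    intro f hf hne
    obtain ⟨u, hu, v, hv, rfl⟩ := Submodule.mem_sup.mp hf
    obtain ⟨x, rfl⟩ := LinearMap.mem_range.mp hu
    obtain ⟨z, rfl⟩ := LinearMap.mem_range.mp hv
    rw [← hAop T hT]
    have hc1 : (inner ℂ (cfc (fun s : ℝ => 1 - s * s) T (cfc gm T x)) (cfc gp T z) : ℂ) = 0 :=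
      cross T hT _ gm gp wAc gm_cont gp_cont hgpwgm x z
    have hc2 : (inner ℂ (cfc (fun s : ℝ => 1 - s * s) T (cfc gp T z)) (cfc gm T x) : ℂ) = 0 :=
      cross T hT _ gp gm wAc gp_cont gm_cont hgmwgp z x
    have hsum : (inner ℂ (cfc (fun s : ℝ => 1 - s * s) T (cfc gm T x + cfc gp T z))
        (cfc gm T x + cfc gp T z) : ℂ)
        = inner ℂ (cfc (fun s : ℝ => 1 - s * s) T (cfc gm T x)) (cfc gm T x)
          + inner ℂ (cfc (fun s : ℝ => 1 - s * s) T (cfc gp T z)) (cfc gp T z) := by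
      rw [map_add, inner_add_left, inner_add_right, inner_add_right, hc1, hc2]
      ring
    simp only [ContinuousLinearMap.coe_coe] at hne ⊢
    rw [hsum, Complex.add_re]
    have hd1 := rangeNonpos T _ gm _ wAc gm_cont gm_nonneg rmc rm0 idmA x
    have hd2 := rangeNonpos T _ gp _ wAc gp_cont gp_nonneg rpc rp0 idpA z
    have key : cfc gm T x ≠ 0 ∨ cfc gp T z ≠ 0 := by
      by_contra hcon
      push_neg at hcon
      exact hne (by rw [hcon.1, hcon.2, add_zero])
    rcases key with h | h
    · have := rangeNeg T _ gm _ wAc gm_cont gm_nonneg rmc rm0 idmA x h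
      linarith
    · have := rangeNeg T _ gp _ wAc gp_cont gp_nonneg rpc rp0 idpA z h
      linarith
  -- trivial intersection
  have hdisj : Vm ⊓ Vp = ⊥ := by
    rw [eq_bot_iff]
    intro u hu
    obtain ⟨hu1, hu2⟩ := Submodule.mem_inf.mp hu
    obtain ⟨x, hx⟩ := LinearMap.mem_range.mp hu1
    obtain ⟨z, hz⟩ := LinearMap.mem_range.mp hu2
    have h1 : cfc gp T u = 0 := by
      rw [← hx, ContinuousLinearMap.coe_coe]
      have h3 : cfc gp T (cfc gm T x) = cfc (fun s : ℝ => gp s * gm s) T x := by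
        rw [cfc_mul gp gm T gp_cont.continuousOn gm_cont.continuousOn]; rfl
      rw [h3, show (fun s : ℝ => gp s * gm s) = fun _ : ℝ => (0:ℝ) from
        funext (fun s => by rw [mul_comm]; exact gmgp s), cfc_const (0:ℝ) T hT, map_zero]
      rfl
    have h2 : (inner ℂ u u : ℂ) = 0 := by
      calc (inner ℂ u u : ℂ) = inner ℂ (cfc gp T z) u := by rw [← hz]; rfl
        _ = inner ℂ z (cfc gp T u) := innerSA _ (cfc_predicate gp T) z u
        _ = 0 := by rw [h1, inner_zero_right]
    exact Submodule.mem_bot ℂ |>.mpr (inner_self_eq_zero.mp h2)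
  -- cardinal bookkeeping
  simp only [negIndex]
  have hinst1 : Nonempty {M : Submodule ℂ H // ∀ f ∈ M, f ≠ 0 →
      (inner ℂ ((1 + T) f) f : ℂ).re < 0} :=
    ⟨⟨⊥, fun f hf hf0 => absurd (Submodule.mem_bot ℂ |>.mp hf) hf0⟩⟩
  have hinst2 : Nonempty {M : Submodule ℂ H // ∀ f ∈ M, f ≠ 0 →
      (inner ℂ ((1 - T) f) f : ℂ).re < 0} :=
    ⟨⟨⊥, fun f hf hf0 => absurd (Submodule.mem_bot ℂ |>.mp hf) hf0⟩⟩
  have hinst3 : Nonempty {M : Submodule ℂ H // ∀ f ∈ M, f ≠ 0 →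
      (inner ℂ ((1 - T ∘L T) f) f : ℂ).re < 0} :=
    ⟨⟨⊥, fun f hf hf0 => absurd (Submodule.mem_bot ℂ |>.mp hf) hf0⟩⟩
  have e1 : (⨆ M : {M : Submodule ℂ H // ∀ f ∈ M, f ≠ 0 →
      (inner ℂ ((1 + T) f) f : ℂ).re < 0}, Module.rank ℂ M.1) = Module.rank ℂ Vm := by
    refine le_antisymm (ciSup_le ?_)
      (le_ciSup (f := fun M : {M : Submodule ℂ H // ∀ f ∈ M, f ≠ 0 →
        (inner ℂ ((1 + T) f) f : ℂ).re < 0} => Module.rank ℂ M.1)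
        (Cardinal.bddAbove_range _) ⟨Vm, hVmNeg⟩)
    rintro ⟨M, hM⟩
    have hmem : ∀ c : H, c ∈ M → cfc gm T c ∈ Vm := fun c _ => LinearMap.mem_range_self _ c
    set φ : M →ₗ[ℂ] Vm := LinearMap.codRestrict Vm
      ((cfc gm T).toLinearMap ∘ₗ M.subtype) (fun c => hmem c.1 c.2) with hφ
    refine LinearMap.rank_le_of_injective φ ((injective_iff_map_eq_zero φ).mpr ?_)
    intro m hm0
    have hBm : cfc gm T (m : H) = 0 := congrArg Subtype.val hm0
    by_contra hmne
    have hval : (m : H) ≠ 0 := fun h => hmne (Subtype.ext h)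
    have hlt := hM m.1 m.2 hval
    have hge := posPlus T hT m.1 hBm
    linarith
  have e2 : (⨆ M : {M : Submodule ℂ H // ∀ f ∈ M, f ≠ 0 →
      (inner ℂ ((1 - T) f) f : ℂ).re < 0}, Module.rank ℂ M.1) = Module.rank ℂ Vp := by
    refine le_antisymm (ciSup_le ?_)
      (le_ciSup (f := fun M : {M : Submodule ℂ H // ∀ f ∈ M, f ≠ 0 →
        (inner ℂ ((1 - T) f) f : ℂ).re < 0} => Module.rank ℂ M.1)
        (Cardinal.bddAbove_range _) ⟨Vp, hVpNeg⟩)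
    rintro ⟨M, hM⟩
    have hmem : ∀ c : H, c ∈ M → cfc gp T c ∈ Vp := fun c _ => LinearMap.mem_range_self _ c
    set φ : M →ₗ[ℂ] Vp := LinearMap.codRestrict Vp
      ((cfc gp T).toLinearMap ∘ₗ M.subtype) (fun c => hmem c.1 c.2) with hφ
    refine LinearMap.rank_le_of_injective φ ((injective_iff_map_eq_zero φ).mpr ?_)
    intro m hm0
    have hBp : cfc gp T (m : H) = 0 := congrArg Subtype.val hm0
    by_contra hmne
    have hval : (m : H) ≠ 0 := fun h => hmne (Subtype.ext h)
    have hlt := hM m.1 m.2 hval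
    have hge := posMinus T hT m.1 hBp
    linarith
  have e3 : (⨆ M : {M : Submodule ℂ H // ∀ f ∈ M, f ≠ 0 →
      (inner ℂ ((1 - T ∘L T) f) f : ℂ).re < 0}, Module.rank ℂ M.1)
      = Module.rank ℂ ↥(Vm ⊔ Vp) := by
    refine le_antisymm (ciSup_le ?_)
      (le_ciSup (f := fun M : {M : Submodule ℂ H // ∀ f ∈ M, f ≠ 0 →
        (inner ℂ ((1 - T ∘L T) f) f : ℂ).re < 0} => Module.rank ℂ M.1)
        (Cardinal.bddAbove_range _) ⟨Vm ⊔ Vp, hWNeg⟩)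
    rintro ⟨M, hM⟩
    have hmem : ∀ c : H, c ∈ M → cfc gm T c + cfc gp T c ∈ Vm ⊔ Vp := fun c _ =>
      add_mem (Submodule.mem_sup_left (LinearMap.mem_range_self _ c))
        (Submodule.mem_sup_right (LinearMap.mem_range_self _ c))
    set φ : M →ₗ[ℂ] ↥(Vm ⊔ Vp) := LinearMap.codRestrict (Vm ⊔ Vp)
      (((cfc gm T).toLinearMap + (cfc gp T).toLinearMap) ∘ₗ M.subtype)
      (fun c => hmem c.1 c.2) with hφ
    refine LinearMap.rank_le_of_injective φ ((injective_iff_map_eq_zero φ).mpr ?_)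
    intro m hm0
    have hBsum : cfc gm T (m : H) + cfc gp T (m : H) = 0 := congrArg Subtype.val hm0
    -- deduce both vanish
    have hmul : cfc gm T (cfc gp T (m : H)) = 0 := by
      have h3 : cfc gm T (cfc gp T (m : H)) = cfc (fun s : ℝ => gm s * gp s) T (m : H) := by
        rw [cfc_mul gm gp T gm_cont.continuousOn gp_cont.continuousOn]; rfl
      rw [h3, show (fun s : ℝ => gm s * gp s) = fun _ : ℝ => (0:ℝ) from funext gmgp,
        cfc_const (0:ℝ) T hT, map_zero]
      rfl
    have h5 : cfc gm T (cfc gm T (m : H)) = 0 := by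
      have h5a : cfc gm T (cfc gm T (m : H) + cfc gp T (m : H)) = 0 := by
        rw [hBsum, map_zero]
      rwa [map_add, hmul, add_zero] at h5a
    have hBm : cfc gm T (m : H) = 0 := by
      have h6 : (inner ℂ (cfc (fun s : ℝ => gm s * gm s) T (m : H)) (m : H) : ℂ).re
          = ‖cfc gm T (m : H)‖ ^ 2 := quadSq T gm gm_cont (m : H)
      have h7 : cfc (fun s : ℝ => gm s * gm s) T (m : H) = 0 := by
        have h8 : cfc (fun s : ℝ => gm s * gm s) T (m : H)
            = cfc gm T (cfc gm T (m : H)) := by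
          rw [cfc_mul gm gm T gm_cont.continuousOn gm_cont.continuousOn]; rfl
        rw [h8, h5]
      rw [h7] at h6
      simp only [inner_zero_left, Complex.zero_re] at h6
      exact norm_eq_zero.mp (pow_eq_zero_iff two_ne_zero |>.mp h6.symm)
    have hBp : cfc gp T (m : H) = 0 := by
      rw [hBm, zero_add] at hBsum; exact hBsum
    by_contra hmne
    have hval : (m : H) ≠ 0 := fun h => hmne (Subtype.ext h)
    have hlt := hM m.1 m.2 hval
    have hge := posA T hT m.1 hBm hBp
    linarith
  have e4 : Module.rank ℂ ↥(Vm ⊔ Vp) = Module.rank ℂ Vm + Module.rank ℂ Vp := by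
    have h := Submodule.rank_sup_add_rank_inf_eq Vm Vp
    rw [hdisj] at h
    simpa using h
  rw [e1, e2, e3, e4]
end
end

section
/- Let 𝔥₁, 𝔥₂ be Hilbert spaces with symmetries J₁, J₂ and let T ∈ B(𝔥₁, 𝔥₂) be a J-contraction, i.e. J₁ − T*J₂T ≥ 0. Then T is J-isometric, i.e. T*J₂T = J₁, if and only if ker T = {0} and ran T ∩ ran D_{T*} = {0}. -/
noncomputable section

open ContinuousLinearMap

section AuxDefect

open scoped NNReal

set_option maxHeartbeats 1000000
set_option synthInstance.maxHeartbeats 400000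

variable {H : Type*} [NormedAddCommGroup H] [InnerProductSpace ℂ H] [CompleteSpace H]

lemma aux_nonneg (C : H →L[ℂ] H) : 0 ≤ ContinuousLinearMap.adjoint C ∘L C := by
  rw [← star_eq_adjoint, ← ContinuousLinearMap.mul_def]
  exact star_mul_self_nonneg C

lemma opAbs_nonneg (C : H →L[ℂ] H) : 0 ≤ opAbs C := CFC.sqrt_nonneg _
lemma opAbsSqrt_nonneg (C : H →L[ℂ] H) : 0 ≤ opAbsSqrt C := CFC.sqrt_nonneg _
lemma opAbsSqrt_sa (C : H →L[ℂ] H) : IsSelfAdjoint (opAbsSqrt C) := (opAbsSqrt_nonneg C).isSelfAdjoint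

lemma quad (C : H →L[ℂ] H) :
    opAbsSqrt C * opAbsSqrt C * (opAbsSqrt C * opAbsSqrt C) = adjoint C * C := by
  unfold opAbsSqrt opAbs
  rw [CFC.sqrt_mul_sqrt_self _ (CFC.sqrt_nonneg _), ← ContinuousLinearMap.mul_def,
    CFC.sqrt_mul_sqrt_self _ (by rw [ContinuousLinearMap.mul_def]; exact aux_nonneg C)]

local notation "⟪" x ", " y "⟫" => @inner ℂ _ _ x y

lemma sa_sq_zero {D : H →L[ℂ] H} (hD : IsSelfAdjoint D) {x : H} (h : D (D x) = 0) : D x = 0 := by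
  have h1 : ⟪D x, D x⟫ = ⟪x, D (D x)⟫ := by
    nth_rewrite 1 [← hD.adjoint_eq]
    exact adjoint_inner_left D (D x) x
  rw [h, inner_zero_right] at h1
  exact inner_self_eq_zero.mp h1

lemma opAbsSqrt_ker (C : H →L[ℂ] H) {x : H} (h : C x = 0) : opAbsSqrt C x = 0 := by
  have hD := opAbsSqrt_sa C
  have h4 : opAbsSqrt C (opAbsSqrt C (opAbsSqrt C (opAbsSqrt C x))) = 0 := by
    have := congrArg (fun (A : H →L[ℂ] H) => A x) (quad C)
    simp only [ContinuousLinearMap.mul_apply] at this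
    rw [this, h, map_zero]
  exact sa_sq_zero hD (sa_sq_zero hD (sa_sq_zero hD h4))

lemma g_cont : Continuous (fun t : ℝ => t * (Real.sqrt |t|)⁻¹) := by
  rw [continuous_iff_continuousAt]
  intro x
  by_cases hx : x = 0
  · subst hx
    rw [ContinuousAt]
    simp only [abs_zero, Real.sqrt_zero, inv_zero, mul_zero]
    apply squeeze_zero_norm (a := fun t : ℝ => Real.sqrt |t|)
    · intro t
      by_cases ht : t = 0
      · simp [ht]
      · have h1 : Real.sqrt |t| ≠ 0 := by positivity
        have : ‖t * (Real.sqrt |t|)⁻¹‖ = |t| * (Real.sqrt |t|)⁻¹ := by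
          rw [Real.norm_eq_abs, abs_mul, abs_inv, abs_of_nonneg (Real.sqrt_nonneg _)]
        rw [this]
        nth_rewrite 1 [← Real.mul_self_sqrt (abs_nonneg t)]
        rw [mul_assoc, mul_inv_cancel₀ h1, mul_one]
    · have : Continuous (fun t : ℝ => Real.sqrt |t|) := Real.continuous_sqrt.comp continuous_abs
      simpa using this.tendsto 0
  · have h1 : Real.sqrt |x| ≠ 0 := by
      have : (0:ℝ) < |x| := abs_pos.mpr hx
      positivity
    exact (continuous_id.continuousAt).mul
      (((Real.continuous_sqrt.comp continuous_abs).continuousAt).inv₀ h1)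

lemma opAbs_eq_cfc (C : H →L[ℂ] H) (hC : IsSelfAdjoint C) :
    opAbs C = cfc (fun t : ℝ => |t|) C := by
  have h1 : ContinuousLinearMap.adjoint C ∘L C = C * C := by
    rw [hC.adjoint_eq]; rfl
  have hCC : (0:H →L[ℂ] H) ≤ C * C := by
    have := star_mul_self_nonneg C
    rwa [hC.star_eq] at this
  have h2 : (C : H →L[ℂ] H) * C = cfc (fun t : ℝ => t * t) C := by
    rw [cfc_mul (fun t : ℝ => t) (fun t : ℝ => t) C continuous_id.continuousOn
      continuous_id.continuousOn, cfc_id' ℝ C hC]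
  unfold opAbs
  rw [h1, CFC.sqrt_eq_cfc, cfc_nnreal_eq_real (a := C * C) NNReal.sqrt hCC]
  have h3 : (fun x : ℝ => ((NNReal.sqrt x.toNNReal : ℝ≥0) : ℝ)) = Real.sqrt := funext fun x => by rw [Real.sqrt]
  rw [h3, h2, ← cfc_comp Real.sqrt (fun t : ℝ => t * t) C hC
    (Real.continuous_sqrt.continuousOn) (by fun_prop)]
  exact cfc_congr fun x _ => Real.sqrt_mul_self_eq_abs x

lemma opAbsSqrt_eq_cfc (C : H →L[ℂ] H) (hC : IsSelfAdjoint C) :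
    opAbsSqrt C = cfc (fun t : ℝ => Real.sqrt |t|) C := by
  unfold opAbsSqrt
  have habs : (0:H →L[ℂ] H) ≤ cfc (fun t : ℝ => |t|) C :=
    cfc_nonneg fun x _ => abs_nonneg x
  rw [opAbs_eq_cfc C hC, CFC.sqrt_eq_cfc, cfc_nnreal_eq_real (a := cfc (fun t : ℝ => |t|) C) NNReal.sqrt habs]
  have h3 : (fun x : ℝ => ((NNReal.sqrt x.toNNReal : ℝ≥0) : ℝ)) = Real.sqrt := funext fun x => by rw [Real.sqrt]
  rw [h3, ← cfc_comp Real.sqrt (fun t : ℝ => |t|) C hC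
    (Real.continuous_sqrt.continuousOn) (continuous_abs.continuousOn)]
  rfl

lemma opAbsSqrt_factor (C : H →L[ℂ] H) (hC : IsSelfAdjoint C) :
    ∃ E : H →L[ℂ] H, C = opAbsSqrt C * E := by
  refine ⟨cfc (fun t : ℝ => t * (Real.sqrt |t|)⁻¹) C, ?_⟩
  rw [opAbsSqrt_eq_cfc C hC,
    ← cfc_mul (fun t : ℝ => Real.sqrt |t|) (fun t : ℝ => t * (Real.sqrt |t|)⁻¹) C
      (Real.continuous_sqrt.comp continuous_abs).continuousOn g_cont.continuousOn]
  have : ∀ t : ℝ, Real.sqrt |t| * (t * (Real.sqrt |t|)⁻¹) = t := by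
    intro t
    by_cases ht : t = 0
    · simp [ht]
    · have h1 : Real.sqrt |t| ≠ 0 := by
        have : (0:ℝ) < |t| := abs_pos.mpr ht
        positivity
      field_simp
  calc C = cfc (fun t : ℝ => t) C := (cfc_id' ℝ C hC).symm
    _ = _ := cfc_congr fun x _ => (this x).symm

end AuxDefect

set_option maxHeartbeats 1000000
set_option synthInstance.maxHeartbeats 400000

/-- a `J`-contraction `T` is `J`-isometric iff `ker T = {0}` and
`ran T ∩ ran D_{T*} = {0}`. -/
theorem J_isometric_iff_trivial_kernel_and_intersection
    {H₁ H₂ : Type*}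
    [NormedAddCommGroup H₁] [InnerProductSpace ℂ H₁] [CompleteSpace H₁]
    [NormedAddCommGroup H₂] [InnerProductSpace ℂ H₂] [CompleteSpace H₂]
    (J₁ : H₁ →L[ℂ] H₁) (hJ₁ : IsSymmetryOp J₁)
    (J₂ : H₂ →L[ℂ] H₂) (hJ₂ : IsSymmetryOp J₂)
    (T : H₁ →L[ℂ] H₂)
    (hcontr : 0 ≤ J₁ - ContinuousLinearMap.adjoint T ∘L (J₂ ∘L T)) :
    ContinuousLinearMap.adjoint T ∘L (J₂ ∘L T) = J₁ ↔
      (∀ f : H₁, T f = 0 → f = 0) ∧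
      Set.range ⇑T ∩
        Set.range ⇑(opAbsSqrt (J₂ - T ∘L (J₁ ∘L ContinuousLinearMap.adjoint T)))
          = {0} := by
  have hJ1 : ∀ x, J₁ (J₁ x) = x := fun x => by
    have := congrArg (fun A : H₁ →L[ℂ] H₁ => A x) hJ₁.2
    simpa using this
  have hJ2 : ∀ y, J₂ (J₂ y) = y := fun y => by
    have := congrArg (fun A : H₂ →L[ℂ] H₂ => A y) hJ₂.2
    simpa using this
  set C : H₂ →L[ℂ] H₂ := J₂ - T ∘L (J₁ ∘L ContinuousLinearMap.adjoint T) with hCdef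
  have hCapp : ∀ y, C y = J₂ y - T (J₁ (ContinuousLinearMap.adjoint T y)) := fun y => by
    simp [hCdef]
  have hCadj : ContinuousLinearMap.adjoint C = C := by
    rw [hCdef, map_sub, hJ₂.1.adjoint_eq, adjoint_comp, adjoint_comp, adjoint_adjoint,
      hJ₁.1.adjoint_eq, comp_assoc]
  have hCsa : IsSelfAdjoint C := (star_eq_adjoint C).trans hCadj
  set D := opAbsSqrt C with hDdef
  constructor
  · intro hiso
    have hisoapp : ∀ x, ContinuousLinearMap.adjoint T (J₂ (T x)) = J₁ x := fun x => by
      have := congrArg (fun A : H₁ →L[ℂ] H₁ => A x) hiso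
      simpa using this
    constructor
    · intro f hf
      have h0 : J₁ f = 0 := by rw [← hisoapp f, hf, map_zero, map_zero]
      rw [← hJ1 f, h0, map_zero]
    · -- intersection
      have h1 : ∀ x, C (J₂ (T x)) = 0 := fun x => by
        rw [hCapp, hJ2, hisoapp, hJ1, sub_self]
      have hTadjJC : ∀ y, ContinuousLinearMap.adjoint T (J₂ (C y)) = 0 := fun y => by
        rw [hCapp, map_sub, map_sub, hJ2, hisoapp, hJ1, sub_self]
      have hCJC : ∀ y, C (J₂ (C y)) = C y := fun y => by
        rw [hCapp (J₂ (C y)), hJ2, hTadjJC, map_zero, map_zero, sub_zero]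
      set K := (LinearMap.ker (C : H₂ →ₗ[ℂ] H₂))ᗮ with hKdef
      haveI : CompleteSpace K := (Submodule.isClosed_orthogonal _).completeSpace_coe
      set P : H₂ →L[ℂ] H₂ := K.subtypeL ∘L K.orthogonalProjectionOnto with hPdef
      have hPsa : IsSelfAdjoint P := isSelfAdjoint_starProjection K
      have hPzero : ∀ z, C z = 0 → P z = 0 := by
        intro z hz
        have hz' : z ∈ Kᗮ := Submodule.le_orthogonal_orthogonal _ hz
        have := Submodule.orthogonalProjectionOnto_apply_of_mem_orthogonal hz'
        simp [hPdef, this]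
      have hPJC : P ∘L (J₂ ∘L C) = P := by
        ext y
        have hmem : C (J₂ (C y) - y) = 0 := by rw [map_sub, hCJC, sub_self]
        have := hPzero _ hmem
        rw [map_sub, sub_eq_zero] at this
        simpa [comp_apply] using this
      have hCJP : C ∘L (J₂ ∘L P) = P := by
        have := congrArg ContinuousLinearMap.adjoint hPJC
        rwa [adjoint_comp, adjoint_comp, hCadj, hJ₂.1.adjoint_eq, hPsa.adjoint_eq,
          ← comp_assoc] at this
      apply Set.eq_singleton_iff_unique_mem.mpr
      constructor
      · exact ⟨⟨0, map_zero T⟩, ⟨0, map_zero D⟩⟩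
      · rintro g ⟨⟨f, hf⟩, ⟨h, hh⟩⟩
        have hgK : g ∈ K := by
          rw [hKdef]
          intro u hu
          have hDu : D u = 0 := opAbsSqrt_ker C hu
          have : (inner ℂ u (D h) : ℂ) = inner ℂ (ContinuousLinearMap.adjoint D u) h :=
            (adjoint_inner_left D h u).symm
          rw [(opAbsSqrt_sa C).adjoint_eq] at this
          rw [← hh, this]
          show (inner ℂ (D u) h : ℂ) = 0
          rw [hDu, inner_zero_left]
        have hPg : P g = g := by
          exact (Submodule.starProjection_eq_self_iff (K := K)).mpr hgK
        have hfin := congrArg (fun A : H₂ →L[ℂ] H₂ => A g) hCJP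
        simp only [comp_apply] at hfin
        rw [hPg, ← hf, h1 f] at hfin
        show g = 0
        rw [← hf]
        exact hfin.symm
  · rintro ⟨hker, hint⟩
    obtain ⟨E, hE⟩ := opAbsSqrt_factor C hCsa
    have key : ∀ f, J₁ f - ContinuousLinearMap.adjoint T (J₂ (T f)) = 0 := by
      intro f
      set x := T (J₁ (J₁ f - ContinuousLinearMap.adjoint T (J₂ (T f)))) with hxdef
      have hxC : x = C (J₂ (T f)) := by
        rw [hCapp, hJ2, hxdef, map_sub, map_sub, hJ1]
      have hx2 : x ∈ Set.range ⇑D := by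
        refine ⟨E (J₂ (T f)), ?_⟩
        rw [hxC, hE]
        rfl
      have hx0 : x = 0 := by
        rw [← Set.mem_singleton_iff, ← hint]
        exact ⟨⟨_, rfl⟩, hx2⟩
      have := hker _ hx0
      have h2 := congrArg J₁ this
      rwa [hJ1, map_zero] at h2
    ext f
    have := key f
    rw [sub_eq_zero] at this
    simp [comp_apply, this.symm]
end
end
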